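/- Let T be a forest with v, v_1,...,v_n, T', T'' as in the recursive setup. Then the top total Betti number satisfies: β_{pd(T)}(T) = β_{pd(T')}(T') if pd(T') > n + pd(T''); β_{pd(T)}(T) = β_{pd(T'')}(T'') if pd(T') < n + pd(T''); and β_{pd(T)}(T) = β_{pd(T')}(T') + β_{pd(T'')}(T'') if pd(T') = n + pd(T''). -/

import Mathlib

open Finset

/-- An abstract simplicial complex on ambient vertex type `U`:
a downward-closed set of finite subsets of `U`. -/
structure SComplex (U : Type*) where
  faces : Set (Finset U)
  down_closed : ∀ {s t : Finset U}, s ∈ faces → t ⊆ s → t ∈ faces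

namespace SComplex

/-- An auxiliary (arbitrary) linear order on any type, used to fix orientations. -/
noncomputable def auxOrder (U : Type*) : LinearOrder U :=
  letI : DecidableRel (WellOrderingRel (α := U)) := fun _ _ => Classical.propDecidable _
  linearOrderOfSTO WellOrderingRel

/-- The simplicial boundary operator on formal `K`-linear combinations of finite
subsets of `U` (a finite set of cardinality `n+1` is regarded as an `n`-simplex). -/
noncomputable def bdry (K U : Type*) [Field K] : (Finset U →₀ K) →ₗ[K] (Finset U →₀ K) :=
  letI := Classical.decEq U
  letI := auxOrder U
  Finsupp.lsum K fun s => LinearMap.toSpanSingleton K _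
    (∑ v ∈ s, ((-1 : K) ^ ({w ∈ s | w < v}).card) • Finsupp.single (s.erase v) (1 : K))

/-- The space of simplicial `n`-chains of a complex (with `n : ℤ`; the empty face is a
`(-1)`-chain, so that the associated homology is *reduced* homology). -/
noncomputable def chains (K : Type*) [Field K] {U : Type*} (Δ : SComplex U) (n : ℤ) :
    Submodule K (Finset U →₀ K) :=
  Submodule.span K {f | ∃ s ∈ Δ.faces, (s.card : ℤ) = n + 1 ∧ f = Finsupp.single s (1 : K)}

/-- The dimension over `K` of the `n`-th reduced simplicial homology of `Δ`
with coefficients in the field `K`. -/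
noncomputable def rhd (K : Type*) [Field K] {U : Type*} (Δ : SComplex U) (n : ℤ) : ℕ :=
  Module.finrank K ↥(Δ.chains K n ⊓ LinearMap.ker (bdry K U))
    - Module.finrank K ↥((Δ.chains K (n + 1)).map (bdry K U))

/-- The restriction (induced subcomplex) of `Δ` to a subset `W` of its vertices. -/
def restrict {U : Type*} (Δ : SComplex U) (W : Finset U) : SComplex U where
  faces := {s | s ∈ Δ.faces ∧ s ⊆ W}
  down_closed := fun hs hts => ⟨Δ.down_closed hs.1 hts, hts.trans hs.2⟩

/-- The vertex set of a complex, as a `Finset`. -/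
noncomputable def vertexFinset {U : Type*} [Fintype U] (Δ : SComplex U) : Finset U :=
  (Set.toFinite {u : U | {u} ∈ Δ.faces}).toFinset

/-- The graded Betti numbers `β_{i,d}` of the Stanley-Reisner ring `K[Δ]` over the
polynomial ring on the vertices of `Δ`, given by Hochster's formula, with the
conventions `β_{0,d} = δ_{d,0}` and `β_{i,d} = 0` for `i < 0` or `d < 0`. -/
noncomputable def betti (K : Type*) [Field K] {U : Type*} [Fintype U] (Δ : SComplex U)
    (i d : ℤ) : ℕ :=
  if d < 0 then 0 else
    ∑ W ∈ Δ.vertexFinset.powersetCard d.toNat, rhd K (Δ.restrict W) (d - i - 1)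

/-- The total Betti numbers `β_i = Σ_d β_{i,d}`. -/
noncomputable def totalBetti (K : Type*) [Field K] {U : Type*} [Fintype U] (Δ : SComplex U)
    (i : ℤ) : ℕ :=
  ∑ d ∈ Finset.range (Fintype.card U + 1), betti K Δ i (d : ℤ)

/-- The projective dimension of the Stanley-Reisner ring `K[Δ]` over the polynomial ring
on the vertices of `Δ`: the largest `i` with `β_i(Δ) ≠ 0`. -/
noncomputable def pd (K : Type*) [Field K] {U : Type*} [Fintype U] (Δ : SComplex U) : ℕ :=
  sSup {i : ℕ | totalBetti K Δ (i : ℤ) ≠ 0}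

/-- The join of two simplicial complexes. -/
def join {U : Type*} [DecidableEq U] (Δ₁ Δ₂ : SComplex U) : SComplex U where
  faces := {s | ∃ t ∈ Δ₁.faces, ∃ u ∈ Δ₂.faces, s = t ∪ u}
  down_closed := by
    rintro s s' ⟨t, ht, u, hu, rfl⟩ hsub
    refine ⟨s' ∩ t, Δ₁.down_closed ht inter_subset_right,
      s' ∩ u, Δ₂.down_closed hu inter_subset_right, ?_⟩
    ext x
    simp only [Finset.mem_union, Finset.mem_inter]
    constructor
    · intro hx
      rcases Finset.mem_union.1 (hsub hx) with h | h
      · exact Or.inl ⟨hx, h⟩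
      · exact Or.inr ⟨hx, h⟩
    · rintro (⟨h, -⟩ | ⟨h, -⟩) <;> exact h

/-- The intersection of two simplicial complexes. -/
def inter {U : Type*} (Δ₁ Δ₂ : SComplex U) : SComplex U where
  faces := Δ₁.faces ∩ Δ₂.faces
  down_closed := fun hs hts => ⟨Δ₁.down_closed hs.1 hts, Δ₂.down_closed hs.2 hts⟩

/-- The Alexander dual `Δ* = {F ⊆ V(Δ) | V(Δ) \ F ∉ Δ}` of a simplicial complex. -/
def dual {U : Type*} [Fintype U] [DecidableEq U] (Δ : SComplex U) : SComplex U where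
  faces := {F | F ⊆ Δ.vertexFinset ∧ Δ.vertexFinset \ F ∉ Δ.faces}
  down_closed := fun {s t} hs hts =>
    ⟨hts.trans hs.1, fun h => hs.2 (Δ.down_closed h (sdiff_subset_sdiff (le_refl _) hts))⟩

/-- The link of a face `F` in a simplicial complex. -/
def link {U : Type*} [DecidableEq U] (Δ : SComplex U) (F : Finset U) : SComplex U where
  faces := {s | s ∪ F ∈ Δ.faces ∧ Disjoint s F}
  down_closed := fun {s t} hs hts =>
    ⟨Δ.down_closed hs.1 (Finset.union_subset_union_left hts), hs.2.mono_left hts⟩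

/-- The simplicial complex `ε(a₁, …, aₛ; V)` whose maximal faces are the sets
`V \ aᵢ` (for a family `a : ι → Finset U` of subsets of a finite set `V`). -/
def eps {U : Type*} {ι : Type*} [DecidableEq U] (a : ι → Finset U) (V : Finset U) :
    SComplex U where
  faces := {s | ∃ i, s ⊆ V \ a i}
  down_closed := fun {s t} hs hts => hs.imp fun _ hi => hts.trans hi

end SComplex

open SComplex

/-- The independence complex `Δ(G)` of a simple graph: faces are the independent sets. -/
def indepComplex {V : Type*} (G : SimpleGraph V) : SComplex V where
  faces := {s | ∀ u ∈ s, ∀ w ∈ s, ¬ G.Adj u w}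
  down_closed := fun hs hts u hu w hw => hs u (hts hu) w (hts hw)

/-- The graded Betti numbers `β^K_{i,d}(G)` of `K[V(G)]/I(G)`, where `I(G)` is the
edge ideal of `G`. -/
noncomputable def bettiG (K : Type*) [Field K] {V : Type*} [Fintype V] (G : SimpleGraph V)
    (i d : ℤ) : ℕ :=
  betti K (indepComplex G) i d

/-- The total Betti numbers `β^K_i(G) = Σ_d β^K_{i,d}(G)` of the edge ideal quotient. -/
noncomputable def totalBettiG (K : Type*) [Field K] {V : Type*} [Fintype V] (G : SimpleGraph V)
    (i : ℤ) : ℕ :=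
  totalBetti K (indepComplex G) i

/-- The projective dimension `pd^K(G)` of `K[V(G)]/I(G)` over `K[V(G)]`. -/
noncomputable def pdG (K : Type*) [Field K] {V : Type*} [Fintype V] (G : SimpleGraph V) : ℕ :=
  pd K (indepComplex G)

/-!
By Hochster's formula `β_i(T) = ∑_W dim H̃_{|W|-i-1}(Δ(T)_W)`, where `Δ(T)` is the independence
complex. Split the sum according to whether `W` contains the leaf `v₁` and its neighbour `v`.
Without `v₁` the terms add up to `β_i(T')`. With `v₁` but not `v`, `Δ(T)_W` is a cone with apex
`v₁`, hence acyclic. With both, `Δ(T)_W` is, up to homotopy, the suspension of the link of `v`,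
which is `Δ(T'')` restricted to `W \ N[v]`; writing `W = {v, v₁} ∪ S ∪ B` with
`S ⊆ N(v) \ {v₁}` gives
  `β_i(T) = β_i(T') + ∑_{S ⊆ N(v) \ {v₁}} β_{i-1-|S|}(T'')`.
The second sum vanishes above degree `n + pd(T'')`, where only `S = N(v) \ {v₁}` contributes,
with value `β_{pd(T'')}(T'')`; comparing with `pd(T')` gives the three cases.
-/

theorem Submodule.finrank_sub_finrank_eq_finrank_quotient {K M : Type*} [DivisionRing K]
    [AddCommGroup M] [Module K M] [Module.Finite K M] {Z B : Submodule K M} (hB : B ≤ Z) :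
    Module.finrank K Z - Module.finrank K B = Module.finrank K (Z ⧸ B.comap Z.subtype) := by
  rw [← (Submodule.comapSubtypeEquivOfLe hB).finrank_eq,
    ← Submodule.finrank_quotient_add_finrank (B.comap Z.subtype), Nat.add_sub_cancel]

theorem Submodule.finrank_sub_finrank_eq_of_inverse_mod {K M : Type*} [DivisionRing K]
    [AddCommGroup M] [Module K M] [Module.Finite K M] {Z₁ B₁ Z₂ B₂ : Submodule K M}
    (hB₁ : B₁ ≤ Z₁) (hB₂ : B₂ ≤ Z₂) {f g : M →ₗ[K] M}
    (hf : ∀ x ∈ Z₁, f x ∈ Z₂) (hg : ∀ x ∈ Z₂, g x ∈ Z₁)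
    (hfB : ∀ x ∈ B₁, f x ∈ B₂) (hgB : ∀ x ∈ B₂, g x ∈ B₁)
    (hgf : ∀ x ∈ Z₁, g (f x) - x ∈ B₁) (hfg : ∀ x ∈ Z₂, f (g x) - x ∈ B₂) :
    Module.finrank K Z₁ - Module.finrank K B₁ = Module.finrank K Z₂ - Module.finrank K B₂ := by
  rw [finrank_sub_finrank_eq_finrank_quotient hB₁, finrank_sub_finrank_eq_finrank_quotient hB₂]
  let F := (B₁.comap Z₁.subtype).mapQ (B₂.comap Z₂.subtype) (f.restrict hf) fun x hx => hfB _ hx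
  let G := (B₂.comap Z₂.subtype).mapQ (B₁.comap Z₁.subtype) (g.restrict hg) fun x hx => hgB _ hx
  refine (LinearEquiv.ofLinearMap F G ?_ ?_).finrank_eq
  · exact linearMap_qext _ (LinearMap.ext fun x => (Quotient.eq _).2 (hfg x x.2))
  · exact linearMap_qext _ (LinearMap.ext fun x => (Quotient.eq _).2 (hgf x x.2))

theorem Finset.neg_one_pow_card_filter_mul {R α : Type*} [Monoid R] [HasDistribNeg R]
    (t : Finset α) (P Q : α → Prop) [DecidablePred P] [DecidablePred Q] :
    (-1 : R) ^ #{a ∈ t | P a} * (-1) ^ #{a ∈ t | Q a}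
      = (-1) ^ (#{a ∈ t | P a ∧ ¬ Q a} + #{a ∈ t | ¬ P a ∧ Q a}) := by
  have hP := card_filter_add_card_filter_not (s := t.filter P) (p := Q)
  have hQ := card_filter_add_card_filter_not (s := t.filter Q) (p := P)
  simp only [filter_filter] at hP hQ
  rw [← hP, ← hQ, filter_congr (p := fun a => Q a ∧ P a) (q := fun a => P a ∧ Q a)
    (fun _ _ => and_comm), filter_congr (p := fun a => Q a ∧ ¬ P a) (q := fun a => ¬ P a ∧ Q a)
    (fun _ _ => and_comm), ← pow_add, add_add_add_comm, ← two_mul, add_comm, pow_add, pow_mul, neg_one_sq, one_pow,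
    mul_one]

theorem Finset.sum_powerset_union_of_disjoint {α M : Type*} [DecidableEq α] [AddCommMonoid M]
    {s t : Finset α} (h : Disjoint s t) (f : Finset α → M) :
    ∑ A ∈ (s ∪ t).powerset, f A = ∑ S ∈ s.powerset, ∑ B ∈ t.powerset, f (S ∪ B) := by
  induction s using Finset.induction_on generalizing f with
  | empty => simp
  | insert a s ha ih =>
    rw [disjoint_insert_left] at h
    rw [insert_union, sum_powerset_insert (by simp [ha, h.1]), sum_powerset_insert ha, ih h.2,
      ih h.2]
    simp only [insert_union]

def IsTopDegree (f : ℤ → ℕ) (p : ℤ) : Prop :=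
  f p ≠ 0 ∧ ∀ i, p < i → f i = 0

namespace IsTopDegree

variable {f g : ℤ → ℕ} {p q : ℤ}

theorem add_of_lt (hf : IsTopDegree f p) (hg : ∀ i, q < i → g i = 0) (hqp : q < p) :
    IsTopDegree (f + g) p ∧ (f + g) p = f p := by
  have hval : (f + g) p = f p := by rw [Pi.add_apply, hg p hqp, add_zero]
  refine ⟨⟨hval ▸ hf.1, fun i hi => ?_⟩, hval⟩
  rw [Pi.add_apply, hf.2 i hi, hg i (hqp.trans hi)]

theorem add (hf : IsTopDegree f p) (hg : IsTopDegree g p) : IsTopDegree (f + g) p :=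
  ⟨fun h => hf.1 (Nat.eq_zero_of_add_eq_zero_right h),
    fun i hi => by rw [Pi.add_apply, hf.2 i hi, hg.2 i hi]⟩

theorem sum_powerset_sub {α : Type*} (hf : IsTopDegree f p) (X : Finset α) {N : ℤ}
    (hN : N = p + #X + 1) :
    IsTopDegree (fun i => ∑ S ∈ X.powerset, f (i - 1 - #S)) N
      ∧ ∑ S ∈ X.powerset, f (N - 1 - #S) = f p := by
  subst hN
  have hval : ∑ S ∈ X.powerset, f (p + #X + 1 - 1 - #S) = f p := by
    rw [sum_eq_single_of_mem X (mem_powerset_self X) fun S hS hSX => hf.2 _ ?_]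
    · congr 1
      ring
    · have := card_lt_card (ssubset_of_subset_of_ne (mem_powerset.1 hS) hSX)
      omega
  refine ⟨⟨fun h0 => hf.1 (hval.symm.trans h0), fun i hi => sum_eq_zero fun S hS => hf.2 _ ?_⟩,
    hval⟩
  have := card_le_card (mem_powerset.1 hS)
  omega

end IsTopDegree

namespace SComplex

attribute [ext] SComplex

section Operators

variable (K : Type*) [Field K] {U : Type*}

noncomputable def sign (x : U) (s : Finset U) : K :=
  letI := auxOrder U
  (-1 : K) ^ #{w ∈ s | w < x}

theorem sign_mul_self (x : U) (s : Finset U) : sign K x s * sign K x s = 1 := by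
  rw [sign, ← pow_add]
  exact Even.neg_one_pow ⟨_, rfl⟩

variable [DecidableEq U]

theorem sign_erase_self (x : U) (s : Finset U) : sign K x (s.erase x) = sign K x s := by
  let := auxOrder U
  rw [sign, sign, filter_erase, erase_eq_of_notMem (by simp)]

theorem sign_insert_self (x : U) (s : Finset U) : sign K x (insert x s) = sign K x s := by
  let := auxOrder U
  rw [sign, sign, filter_insert, if_neg (lt_irrefl x)]

theorem sign_insert_mul_sign {v x : U} {s : Finset U} (hvx : v ≠ x) (hxs : x ∉ s)
    (hvs : v ∈ s) :
    sign K v (insert x s) * sign K x s = -(sign K v s * sign K x (s.erase v)) := by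
  let := auxOrder U
  simp only [sign]
  rcases lt_or_gt_of_ne hvx with hlt | hlt
  · have hv : v ∈ {w ∈ s | w < x} := mem_filter.2 ⟨hvs, hlt⟩
    rw [filter_insert, if_neg (not_lt_of_gt hlt), filter_erase,
      ← Nat.succ_pred_eq_of_pos (card_pos.2 ⟨v, hv⟩), card_erase_of_mem hv, Nat.pred_eq_sub_one,
      pow_succ]
    ring
  · rw [filter_insert, if_pos hlt, card_insert_of_notMem (by simp [hxs]), filter_erase,
      erase_eq_of_notMem (by simp [not_lt_of_gt hlt]), pow_succ]
    ring

theorem sign_mul_sign_erase {v x : U} {s : Finset U} (hvx : v ≠ x) (hx : x ∈ s) (hv : v ∈ s) :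
    sign K x s * sign K v (s.erase x) = -(sign K v s * sign K x (s.erase v)) := by
  have h := sign_insert_mul_sign K hvx (notMem_erase x s) (mem_erase.2 ⟨hvx, hv⟩)
  rw [insert_erase hx, sign_erase_self, erase_right_comm, sign_erase_self] at h
  linear_combination (sign K v s * sign K v (s.erase x)) * h
    - (sign K x s * sign K v (s.erase x)) * sign_mul_self K v s
    - (sign K v s * sign K x (s.erase v)) * sign_mul_self K v (s.erase x)

theorem bdry_single (s : Finset U) :
    bdry K U (Finsupp.single s 1) = ∑ v ∈ s, sign K v s • Finsupp.single (s.erase v) (1 : K) := by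
  simp only [bdry, sign, Finsupp.lsum_single, LinearMap.toSpanSingleton_apply, one_smul]
  congr!

noncomputable def coneOp (x : U) : (Finset U →₀ K) →ₗ[K] (Finset U →₀ K) :=
  Finsupp.linearCombination K fun s =>
    if x ∈ s then 0 else sign K x s • Finsupp.single (insert x s) 1

noncomputable def capOp (x : U) : (Finset U →₀ K) →ₗ[K] (Finset U →₀ K) :=
  Finsupp.linearCombination K fun s =>
    if x ∈ s then sign K x s • Finsupp.single (s.erase x) 1 else 0

theorem coneOp_single (x : U) (s : Finset U) :
    coneOp K x (Finsupp.single s 1) =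
      if x ∈ s then 0 else sign K x s • Finsupp.single (insert x s) 1 := by
  rw [coneOp, Finsupp.linearCombination_single, one_smul]

theorem capOp_single (x : U) (s : Finset U) :
    capOp K x (Finsupp.single s 1) =
      if x ∈ s then sign K x s • Finsupp.single (s.erase x) 1 else 0 := by
  rw [capOp, Finsupp.linearCombination_single, one_smul]

theorem bdry_coneOp_add (x : U) (f : Finset U →₀ K) :
    bdry K U (coneOp K x f) + coneOp K x (bdry K U f) = f := by
  suffices h : bdry K U ∘ₗ coneOp K x + coneOp K x ∘ₗ bdry K U = LinearMap.id from
    LinearMap.congr_fun h f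
  ext s : 2
  simp only [LinearMap.add_apply, LinearMap.comp_apply, Finsupp.lsingle_apply,
    LinearMap.id_apply]
  by_cases hx : x ∈ s
  · rw [coneOp_single, if_pos hx, map_zero, zero_add, bdry_single, map_sum,
      sum_eq_single_of_mem x hx fun v _ hvx => by
        rw [map_smul, coneOp_single, if_pos (mem_erase.2 ⟨Ne.symm hvx, hx⟩), smul_zero],
      map_smul, coneOp_single, if_neg (notMem_erase x s), sign_erase_self, insert_erase hx,
      smul_smul, sign_mul_self, one_smul]
  · rw [coneOp_single, if_neg hx, map_smul, bdry_single, sum_insert hx, erase_insert hx,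
      sign_insert_self, smul_add, smul_smul, sign_mul_self, one_smul, add_assoc,
      add_eq_left, bdry_single, map_sum, smul_sum, ← sum_add_distrib]
    refine sum_eq_zero fun v hv => ?_
    have hvx : v ≠ x := fun h => hx (h ▸ hv)
    rw [map_smul, coneOp_single, if_neg fun h => hx (mem_of_mem_erase h),
      erase_insert_of_ne hvx.symm, smul_smul, smul_smul, ← add_smul, mul_comm (sign K x s),
      sign_insert_mul_sign K hvx hx hv, neg_add_cancel, zero_smul]

theorem bdry_capOp_add (x : U) (f : Finset U →₀ K) :
    bdry K U (capOp K x f) + capOp K x (bdry K U f) = 0 := by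
  suffices h : bdry K U ∘ₗ capOp K x + capOp K x ∘ₗ bdry K U = 0 from
    LinearMap.congr_fun h f
  ext s : 2
  simp only [LinearMap.add_apply, LinearMap.comp_apply, Finsupp.lsingle_apply,
    LinearMap.zero_apply]
  rw [capOp_single, bdry_single, map_sum]
  by_cases hx : x ∈ s
  · rw [if_pos hx, map_smul, bdry_single, ← add_sum_erase _ _ hx, map_smul, capOp_single,
      if_neg (notMem_erase x s), smul_zero, zero_add, smul_sum, ← sum_add_distrib]
    refine sum_eq_zero fun v hv => ?_
    obtain ⟨hvx, hvs⟩ := mem_erase.1 hv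
    rw [map_smul, capOp_single, if_pos (mem_erase.2 ⟨hvx.symm, hx⟩), smul_smul, smul_smul,
      erase_right_comm, ← add_smul, sign_mul_sign_erase K hvx hx hvs, neg_add_cancel,
      zero_smul]
  · rw [if_neg hx, map_zero, zero_add]
    refine sum_eq_zero fun v _ => ?_
    rw [map_smul, capOp_single, if_neg fun h => hx (mem_of_mem_erase h), smul_zero]

theorem capOp_coneOp_single {x : U} {s : Finset U} :
    capOp K x (coneOp K x (Finsupp.single s 1)) = if x ∈ s then 0 else Finsupp.single s 1 := by
  rw [coneOp_single]
  split_ifs with hx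
  · rw [map_zero]
  · rw [map_smul, capOp_single, if_pos (mem_insert_self x s), sign_insert_self,
      erase_insert hx, smul_smul, sign_mul_self, one_smul]

theorem coneOp_capOp_single {x : U} {s : Finset U} :
    coneOp K x (capOp K x (Finsupp.single s 1)) = if x ∈ s then Finsupp.single s 1 else 0 := by
  rw [capOp_single]
  split_ifs with hx
  · rw [map_smul, coneOp_single, if_neg (notMem_erase x s), sign_erase_self, insert_erase hx,
      smul_smul, sign_mul_self, one_smul]
  · rw [map_zero]

theorem capOp_coneOp_single_of_ne {p u : U} (hpu : p ≠ u) {s : Finset U} (hp : p ∉ s) :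
    capOp K p (coneOp K u (Finsupp.single s 1)) = 0 := by
  rw [coneOp_single]
  split_ifs
  · rw [map_zero]
  · rw [map_smul, capOp_single, if_neg (by simp [hp, hpu]), smul_zero]

end Operators

section Homology

variable {K : Type*} [Field K] {U : Type*}

variable (K) in
theorem bdry_bdry (f : Finset U →₀ K) : bdry K U (bdry K U f) = 0 := by
  classical
  suffices h : bdry K U ∘ₗ bdry K U = 0 from LinearMap.congr_fun h f
  ext s : 2
  simp only [LinearMap.comp_apply, Finsupp.lsingle_apply, LinearMap.zero_apply]
  induction s using Finset.strongInduction with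
  | H s ih =>
    obtain rfl | ⟨x, hx⟩ := s.eq_empty_or_nonempty
    · simp [bdry_single]
    -- `s = ±(x * (s - x))`, and `∂∂(x * t) = ∂t - ∂(x * ∂t) = x * ∂∂t`
    have hs : Finsupp.single s (1 : K)
        = sign K x (s.erase x) • coneOp K x (Finsupp.single (s.erase x) 1) := by
      rw [coneOp_single, if_neg (notMem_erase x s), smul_smul, sign_mul_self, one_smul,
        insert_erase hx]
    have hcone := fun f => eq_sub_of_add_eq (bdry_coneOp_add K x f)
    rw [hs, map_smul, map_smul, hcone, map_sub, hcone, ih _ (erase_ssubset hx), map_zero,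
      sub_zero, sub_self, smul_zero]

theorem single_mem_chains {Δ : SComplex U} {s : Finset U} (hs : s ∈ Δ.faces) {n : ℤ}
    (hc : (#s : ℤ) = n + 1) : Finsupp.single s (1 : K) ∈ Δ.chains K n :=
  Submodule.subset_span ⟨s, hs, hc, rfl⟩

theorem map_mem_chains {Δ Δ' : SComplex U} {n m : ℤ}
    {φ : (Finset U →₀ K) →ₗ[K] (Finset U →₀ K)}
    (h : ∀ s ∈ Δ.faces, (#s : ℤ) = n + 1 → φ (Finsupp.single s 1) ∈ Δ'.chains K m)
    {f : Finset U →₀ K} (hf : f ∈ Δ.chains K n) : φ f ∈ Δ'.chains K m := by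
  have : (Δ.chains K n).map φ ≤ Δ'.chains K m := by
    rw [chains, Submodule.map_span, Submodule.span_le]
    rintro _ ⟨_, ⟨s, hs, hc, rfl⟩, rfl⟩
    exact h s hs hc
  exact this (Submodule.mem_map_of_mem hf)

theorem eq_of_mem_chains {Δ : SComplex U} {n : ℤ} {φ ψ : (Finset U →₀ K) →ₗ[K] (Finset U →₀ K)}
    (h : ∀ s ∈ Δ.faces, (#s : ℤ) = n + 1 → φ (Finsupp.single s 1) = ψ (Finsupp.single s 1))
    {f : Finset U →₀ K} (hf : f ∈ Δ.chains K n) : φ f = ψ f := by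
  refine LinearMap.eqOn_span ?_ hf
  rintro _ ⟨s, hs, hc, rfl⟩
  exact h s hs hc

theorem chains_eq_bot (Δ : SComplex U) {n : ℤ} (hn : n < -1) : Δ.chains K n = ⊥ := by
  refine Submodule.span_eq_bot.2 ?_
  rintro _ ⟨s, -, hc, rfl⟩
  omega

variable (K) in
noncomputable def cycles (Δ : SComplex U) (n : ℤ) : Submodule K (Finset U →₀ K) :=
  Δ.chains K n ⊓ LinearMap.ker (bdry K U)

variable (K) in
noncomputable def boundaries (Δ : SComplex U) (n : ℤ) : Submodule K (Finset U →₀ K) :=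
  (Δ.chains K (n + 1)).map (bdry K U)

theorem mem_cycles {Δ : SComplex U} {n : ℤ} {z : Finset U →₀ K} :
    z ∈ cycles K Δ n ↔ z ∈ Δ.chains K n ∧ bdry K U z = 0 :=
  Submodule.mem_inf.trans (and_congr Iff.rfl LinearMap.mem_ker)

theorem rhd_eq (Δ : SComplex U) (n : ℤ) :
    rhd K Δ n = Module.finrank K (cycles K Δ n) - Module.finrank K (boundaries K Δ n) :=
  rfl

theorem bdry_mem_chains {Δ : SComplex U} {n : ℤ} {f : Finset U →₀ K}
    (hf : f ∈ Δ.chains K (n + 1)) : bdry K U f ∈ Δ.chains K n := by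
  classical
  refine map_mem_chains (fun s hs hc => ?_) hf
  rw [bdry_single]
  refine Submodule.sum_mem _ fun v hv => Submodule.smul_mem _ _ ?_
  refine single_mem_chains (Δ.down_closed hs (erase_subset v s)) ?_
  rw [card_erase_of_mem hv, Nat.cast_sub (card_pos.2 ⟨v, hv⟩)]
  omega

theorem boundaries_le_cycles (Δ : SComplex U) (n : ℤ) : boundaries K Δ n ≤ cycles K Δ n := by
  rintro _ ⟨y, hy, rfl⟩
  exact ⟨bdry_mem_chains hy, bdry_bdry K y⟩

theorem coneOp_mem_chains [DecidableEq U] {Δ Δ' : SComplex U} {x : U}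
    (h : ∀ s ∈ Δ.faces, x ∉ s → insert x s ∈ Δ'.faces) {n : ℤ} {f : Finset U →₀ K}
    (hf : f ∈ Δ.chains K n) : coneOp K x f ∈ Δ'.chains K (n + 1) := by
  refine map_mem_chains (fun s hs hc => ?_) hf
  rw [coneOp_single]
  split_ifs with hx
  · exact Submodule.zero_mem _
  · refine Submodule.smul_mem _ _ (single_mem_chains (h s hs hx) ?_)
    rw [card_insert_of_notMem hx]
    omega

theorem capOp_mem_chains [DecidableEq U] {Δ Δ' : SComplex U} {x : U}
    (h : ∀ s ∈ Δ.faces, x ∈ s → s.erase x ∈ Δ'.faces) {n : ℤ} {f : Finset U →₀ K}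
    (hf : f ∈ Δ.chains K (n + 1)) : capOp K x f ∈ Δ'.chains K n := by
  refine map_mem_chains (fun s hs hc => ?_) hf
  rw [capOp_single]
  split_ifs with hx
  · refine Submodule.smul_mem _ _ (single_mem_chains (h s hs hx) ?_)
    rw [card_erase_of_mem hx, Nat.cast_sub (card_pos.2 ⟨x, hx⟩)]
    omega
  · exact Submodule.zero_mem _

theorem mem_boundaries_of_cone [DecidableEq U] {Δ Δ' : SComplex U} {x : U}
    (hx : ∀ s ∈ Δ'.faces, x ∉ s → insert x s ∈ Δ.faces) {n : ℤ} {z : Finset U →₀ K}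
    (hz : z ∈ Δ'.chains K n) (hz₀ : bdry K U z = 0) : z ∈ boundaries K Δ n := by
  refine ⟨coneOp K x z, coneOp_mem_chains hx hz, ?_⟩
  simpa [hz₀] using bdry_coneOp_add K x z

theorem rhd_eq_zero_of_cone [DecidableEq U] (Δ : SComplex U) {x : U}
    (hx : ∀ s ∈ Δ.faces, insert x s ∈ Δ.faces) (n : ℤ) : rhd K Δ n = 0 := by
  have : cycles K Δ n = boundaries K Δ n :=
    le_antisymm (fun z hz => mem_boundaries_of_cone (fun s hs _ => hx s hs) hz.1 hz.2)
      (boundaries_le_cycles Δ n)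
  rw [rhd_eq, this, Nat.sub_self]

theorem rhd_succ_eq_of_homotopy_inverse [Fintype U] {Δ₁ Δ₂ : SComplex U}
    {φ ψ : (Finset U →₀ K) →ₗ[K] (Finset U →₀ K)}
    (hφ : ∀ k f, f ∈ Δ₁.chains K (k + 1) → φ f ∈ Δ₂.chains K k)
    (hψ : ∀ k f, f ∈ Δ₂.chains K k → ψ f ∈ Δ₁.chains K (k + 1))
    (hφ_bdry : ∀ f, bdry K U (φ f) = -φ (bdry K U f))
    (hψ_bdry : ∀ f, bdry K U (ψ f) = -ψ (bdry K U f)) {n : ℤ}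
    (hψφ : ∀ z ∈ cycles K Δ₁ (n + 1), ψ (φ z) - z ∈ boundaries K Δ₁ (n + 1))
    (hφψ : ∀ z ∈ cycles K Δ₂ n, φ (ψ z) - z ∈ boundaries K Δ₂ n) :
    rhd K Δ₁ (n + 1) = rhd K Δ₂ n := by
  have hφZ : ∀ z ∈ cycles K Δ₁ (n + 1), φ z ∈ cycles K Δ₂ n := by
    simp only [mem_cycles]
    exact fun z ⟨hz, hz₀⟩ => ⟨hφ n z hz, by rw [hφ_bdry, hz₀, map_zero, neg_zero]⟩
  have hψZ : ∀ z ∈ cycles K Δ₂ n, ψ z ∈ cycles K Δ₁ (n + 1) := by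
    simp only [mem_cycles]
    exact fun z ⟨hz, hz₀⟩ => ⟨hψ n z hz, by rw [hψ_bdry, hz₀, map_zero, neg_zero]⟩
  have hφB : ∀ b ∈ boundaries K Δ₁ (n + 1), φ b ∈ boundaries K Δ₂ n := by
    rintro _ ⟨y, hy, rfl⟩
    exact ⟨-φ y, Submodule.neg_mem _ (hφ _ y hy), by rw [map_neg, hφ_bdry, neg_neg]⟩
  have hψB : ∀ b ∈ boundaries K Δ₂ n, ψ b ∈ boundaries K Δ₁ (n + 1) := by
    rintro _ ⟨y, hy, rfl⟩
    exact ⟨-ψ y, Submodule.neg_mem _ (hψ _ y hy), by rw [map_neg, hψ_bdry, neg_neg]⟩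
  exact Submodule.finrank_sub_finrank_eq_of_inverse_mod (boundaries_le_cycles _ _)
    (boundaries_le_cycles _ _) hφZ hψZ hφB hψB hψφ hφψ

end Homology

section Link

variable {U : Type*}

def deletion (Δ : SComplex U) (p : U) : SComplex U where
  faces := {s | s ∈ Δ.faces ∧ p ∉ s}
  down_closed := fun hs hts => ⟨Δ.down_closed hs.1 hts, fun h => hs.2 (hts h)⟩

theorem mem_deletion {Δ : SComplex U} {p : U} {s : Finset U} :
    s ∈ (Δ.deletion p).faces ↔ s ∈ Δ.faces ∧ p ∉ s :=
  Iff.rfl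

variable [DecidableEq U]

theorem mem_link_singleton {Δ : SComplex U} {p : U} {s : Finset U} :
    s ∈ (Δ.link {p}).faces ↔ p ∉ s ∧ insert p s ∈ Δ.faces := by
  show _ ∧ _ ↔ _
  simp only [union_singleton, disjoint_singleton_right, and_comm]

theorem mem_deletion_of_mem_link {Δ : SComplex U} {p : U} {s : Finset U}
    (hs : s ∈ (Δ.link {p}).faces) : s ∈ (Δ.deletion p).faces :=
  ⟨Δ.down_closed (mem_link_singleton.1 hs).2 (subset_insert p s), (mem_link_singleton.1 hs).1⟩

variable {K : Type*} [Field K]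

/-- `Δ` is the union of the star of `p`, a cone over `lk p`, with `del p`, which is a cone with
apex `u`; so `Δ` is homotopy equivalent to the suspension of `lk p`. On chains the equivalence is
`capOp p`, with quasi-inverse `coneOp p - coneOp u`. -/
theorem rhd_succ_eq_rhd_link [Fintype U] (Δ : SComplex U) {p u : U} (hpu : p ≠ u)
    (hcone : ∀ s ∈ (Δ.deletion p).faces, insert u s ∈ Δ.faces) (n : ℤ) :
    rhd K Δ (n + 1) = rhd K (Δ.link {p}) n := by
  set ψ := coneOp K p - coneOp K u
  have hφ : ∀ k f, f ∈ Δ.chains K (k + 1) → capOp K p f ∈ (Δ.link {p}).chains K k :=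
    fun k f => capOp_mem_chains fun s _ hp =>
      mem_link_singleton.2 ⟨notMem_erase p s, by rwa [insert_erase hp]⟩
  have hψ : ∀ k f, f ∈ (Δ.link {p}).chains K k → ψ f ∈ Δ.chains K (k + 1) := fun k f hf =>
    Submodule.sub_mem _ (coneOp_mem_chains (fun s hs _ => (mem_link_singleton.1 hs).2) hf)
      (coneOp_mem_chains (fun s hs _ => hcone s (mem_deletion_of_mem_link hs)) hf)
  have hφ_bdry : ∀ f, bdry K U (capOp K p f) = -capOp K p (bdry K U f) :=
    fun f => eq_neg_of_add_eq_zero_left (bdry_capOp_add K p f)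
  have hψ_bdry : ∀ f, bdry K U (ψ f) = -ψ (bdry K U f) := fun f => by
    simp only [ψ, LinearMap.sub_apply, map_sub, eq_sub_of_add_eq (bdry_coneOp_add K _ f)]
    abel
  refine rhd_succ_eq_of_homotopy_inverse hφ hψ hφ_bdry hψ_bdry (fun z hz => ?_) (fun z hz => ?_)
  · -- `z - ψ (capOp p z)` is a cycle avoiding `p`, hence a boundary of the cone over `u`
    obtain ⟨hz, hz₀⟩ := mem_cycles.1 hz
    have hdel : z - ψ (capOp K p z) ∈ (Δ.deletion p).chains K (n + 1) := by
      have hsplit : z - ψ (capOp K p z)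
          = (z - coneOp K p (capOp K p z)) + coneOp K u (capOp K p z) := by
        simp only [ψ, LinearMap.sub_apply]
        abel
      rw [hsplit]
      refine Submodule.add_mem _ (map_mem_chains (φ := LinearMap.id - coneOp K p ∘ₗ capOp K p)
        (fun s hs hc => ?_) hz) (coneOp_mem_chains (fun s hs _ => ?_) (hφ n z hz))
      · simp only [LinearMap.sub_apply, LinearMap.id_apply, LinearMap.comp_apply,
          coneOp_capOp_single]
        split_ifs with hp
        · rw [sub_self]
          exact Submodule.zero_mem _
        · rw [sub_zero]
          exact single_mem_chains (mem_deletion.2 ⟨hs, hp⟩) hc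
      · exact mem_deletion.2 ⟨hcone s (mem_deletion_of_mem_link hs),
          by simp [hpu, (mem_link_singleton.1 hs).1]⟩
    have hcyc : bdry K U (z - ψ (capOp K p z)) = 0 := by
      rw [map_sub, hψ_bdry, hφ_bdry, hz₀, map_zero, neg_zero, map_zero, neg_zero, sub_zero]
    have := mem_boundaries_of_cone (fun s hs _ => hcone s hs) hdel hcyc
    rw [← neg_sub]
    exact Submodule.neg_mem _ this
  · obtain ⟨hz, -⟩ := mem_cycles.1 hz
    have : capOp K p (ψ z) = z := by
      refine eq_of_mem_chains (φ := capOp K p ∘ₗ ψ) (ψ := LinearMap.id)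
        (fun s hs _ => ?_) hz
      have hps := (mem_link_singleton.1 hs).1
      simp only [ψ, LinearMap.comp_apply, LinearMap.sub_apply, map_sub, LinearMap.id_apply,
        capOp_coneOp_single, if_neg hps, capOp_coneOp_single_of_ne K hpu hps, sub_zero]
    rw [this, sub_self]
    exact Submodule.zero_mem _

end Link

section Map

variable {U₁ U₂ : Type*}

def map (e : U₁ ↪ U₂) (Δ : SComplex U₁) : SComplex U₂ where
  faces := Finset.map e '' Δ.faces
  down_closed := by
    rintro _ t ⟨s, hs, rfl⟩ hts
    obtain ⟨r, hrs, rfl⟩ := subset_map_iff.1 hts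
    exact ⟨r, Δ.down_closed hs hrs, rfl⟩

noncomputable def invCount (e : U₁ → U₂) (t : Finset U₁) : ℕ :=
  let := auxOrder U₁
  let := auxOrder U₂
  ∑ b ∈ t, #{a ∈ t | a < b ∧ e b < e a}

theorem invCount_insert [DecidableEq U₁] (e : U₁ → U₂) {v : U₁} {t : Finset U₁} (hv : v ∉ t) :
    let := auxOrder U₁
    let := auxOrder U₂
    invCount e (insert v t)
      = invCount e t + #{a ∈ t | a < v ∧ e v < e a} + #{a ∈ t | v < a ∧ e a < e v} := by
  let := auxOrder U₁
  let := auxOrder U₂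
  have hstep : ∀ b ∈ t, #{a ∈ insert v t | a < b ∧ e b < e a}
      = #{a ∈ t | a < b ∧ e b < e a} + if v < b ∧ e b < e v then 1 else 0 := by
    intro b _
    rw [filter_insert]
    split_ifs with h
    · rw [card_insert_of_notMem (by simp [hv])]
    · rfl
  simp only [invCount]
  rw [sum_insert hv, filter_insert, if_neg (by simp), sum_congr rfl hstep, sum_add_distrib,
    sum_boole, Nat.cast_id]
  ring

variable (K : Type*) [Field K]

noncomputable def invSign (e : U₁ → U₂) (t : Finset U₁) : K := (-1) ^ invCount e t

theorem invSign_mul_self (e : U₁ → U₂) (t : Finset U₁) : invSign K e t * invSign K e t = 1 := by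
  rw [invSign, ← pow_add]
  exact Even.neg_one_pow ⟨_, rfl⟩

theorem invSign_insert_mul_sign [DecidableEq U₁] [DecidableEq U₂] (e : U₁ ↪ U₂) {v : U₁}
    {t : Finset U₁} (hv : v ∉ t) :
    invSign K e (insert v t) * sign K (e v) ((insert v t).map e)
      = sign K v (insert v t) * invSign K e t := by
  let := auxOrder U₁
  let := auxOrder U₂
  have hmap : #{w ∈ (insert v t).map e | w < e v} = #{a ∈ t | e a < e v} := by
    rw [filter_map, card_map, filter_insert, if_neg (by simp)]
    rfl
  have hv' : #{a ∈ insert v t | a < v} = #{a ∈ t | a < v} := by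
    rw [filter_insert, if_neg (lt_irrefl v)]
  have hne : ∀ a ∈ t, a ≠ v := fun a ha h => hv (h ▸ ha)
  have hparity := Finset.neg_one_pow_card_filter_mul (R := K) t (· < v) (e · < e v)
  rw [filter_congr (q := fun a => a < v ∧ e v < e a) fun a ha => and_congr_right fun _ =>
      by rw [not_lt, le_iff_lt_or_eq, or_iff_left (e.injective.ne (hne a ha)).symm],
    filter_congr (q := fun a => v < a ∧ e a < e v) fun a ha => and_congr_left fun _ =>
      by rw [not_lt, le_iff_lt_or_eq, or_iff_left (hne a ha).symm]] at hparity
  have hsq : (-1 : K) ^ #{a ∈ t | e a < e v} * (-1) ^ #{a ∈ t | e a < e v} = 1 := by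
    rw [← pow_add]
    exact Even.neg_one_pow ⟨_, rfl⟩
  simp only [invSign, sign, hmap, hv', invCount_insert e hv, pow_add]
  linear_combination (-1 : K) ^ invCount e t * (-1) ^ #{a ∈ t | a < v} * hsq
    - (-1 : K) ^ invCount e t * (-1) ^ #{a ∈ t | e a < e v} * hparity

/-- The orientation orders `auxOrder U₁` and `auxOrder U₂` are unrelated, so relabelling along
`e` commutes with the boundary only after twisting by the parity of the inversions of `e`. -/
noncomputable def relabel (e : U₁ ↪ U₂) : (Finset U₁ →₀ K) →ₗ[K] (Finset U₂ →₀ K) :=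
  Finsupp.linearCombination K fun t => invSign K e t • Finsupp.single (t.map e) 1

theorem relabel_single (e : U₁ ↪ U₂) (t : Finset U₁) :
    relabel K e (Finsupp.single t 1) = invSign K e t • Finsupp.single (t.map e) 1 := by
  rw [relabel, Finsupp.linearCombination_single, one_smul]

theorem relabel_injective (e : U₁ ↪ U₂) : Function.Injective (relabel K e) :=
  ((Finsupp.linearIndependent_single_one K _).comp _ (map_injective e)).units_smul
    fun t => ⟨invSign K e t, invSign K e t, invSign_mul_self K e t, invSign_mul_self K e t⟩

theorem bdry_relabel (e : U₁ ↪ U₂) (f : Finset U₁ →₀ K) :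
    bdry K U₂ (relabel K e f) = relabel K e (bdry K U₁ f) := by
  classical
  suffices h : bdry K U₂ ∘ₗ relabel K e = relabel K e ∘ₗ bdry K U₁ from LinearMap.congr_fun h f
  ext t : 2
  simp only [LinearMap.comp_apply, Finsupp.lsingle_apply]
  rw [relabel_single, map_smul, bdry_single, bdry_single, map_sum, sum_map, smul_sum]
  refine sum_congr rfl fun v hv => ?_
  have h := invSign_insert_mul_sign K e (notMem_erase v t)
  rw [insert_erase hv] at h
  rw [map_smul, relabel_single, smul_smul, smul_smul, ← map_erase, h]

theorem map_relabel_chains (e : U₁ ↪ U₂) (Δ : SComplex U₁) (n : ℤ) :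
    (Δ.chains K n).map (relabel K e) = (Δ.map e).chains K n := by
  rw [chains, chains, Submodule.map_span]
  apply le_antisymm
  · refine Submodule.span_le.2 ?_
    rintro _ ⟨_, ⟨t, ht, hc, rfl⟩, rfl⟩
    rw [relabel_single]
    exact Submodule.smul_mem _ _
      (single_mem_chains (Set.mem_image_of_mem _ ht) (by rwa [card_map]))
  · refine Submodule.span_le.2 ?_
    rintro _ ⟨_, ⟨t, ht, rfl⟩, hc, rfl⟩
    rw [card_map] at hc
    refine Submodule.mem_span.2 fun P hP => ?_
    have := Submodule.smul_mem P (invSign K e t) (hP ⟨_, ⟨t, ht, hc, rfl⟩, rfl⟩)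
    rwa [relabel_single, smul_smul, invSign_mul_self, one_smul] at this

theorem rhd_map (e : U₁ ↪ U₂) (Δ : SComplex U₁) (n : ℤ) : rhd K (Δ.map e) n = rhd K Δ n := by
  have hZ : (cycles K Δ n).map (relabel K e) = cycles K (Δ.map e) n := by
    ext y
    simp only [Submodule.mem_map, mem_cycles, ← map_relabel_chains]
    constructor
    · rintro ⟨x, ⟨hx, hx₀⟩, rfl⟩
      exact ⟨⟨x, hx, rfl⟩, by rw [bdry_relabel, hx₀, map_zero]⟩
    · rintro ⟨⟨x, hx, rfl⟩, hy₀⟩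
      refine ⟨x, ⟨hx, relabel_injective K e ?_⟩, rfl⟩
      rw [← bdry_relabel, hy₀, map_zero]
  have hB : (boundaries K Δ n).map (relabel K e) = boundaries K (Δ.map e) n := by
    have hcomm : relabel K e ∘ₗ bdry K U₁ = bdry K U₂ ∘ₗ relabel K e :=
      LinearMap.ext fun f => (bdry_relabel K e f).symm
    rw [boundaries, boundaries, ← map_relabel_chains, ← Submodule.map_comp, hcomm,
      Submodule.map_comp]
  rw [rhd_eq, rhd_eq, ← hZ, ← hB,
    (Submodule.equivMapOfInjective _ (relabel_injective K e) _).finrank_eq.symm,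
    (Submodule.equivMapOfInjective _ (relabel_injective K e) _).finrank_eq.symm]

end Map

section Betti

variable {K : Type*} [Field K] {U : Type*}

theorem rhd_eq_zero_of_lt_neg_one (Δ : SComplex U) {n : ℤ} (hn : n < -1) : rhd K Δ n = 0 := by
  rw [rhd_eq, cycles, chains_eq_bot Δ hn, bot_inf_eq, finrank_bot, Nat.zero_sub]

theorem rhd_restrict_empty (Δ : SComplex U) (h : ∅ ∈ Δ.faces) :
    rhd K (Δ.restrict ∅) (-1) = 1 := by
  have hfaces : ∀ s, s ∈ (Δ.restrict ∅).faces ↔ s = ∅ :=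
    fun s => ⟨fun hs => subset_empty.1 hs.2, by rintro rfl; exact ⟨h, subset_rfl⟩⟩
  have hZ : cycles K (Δ.restrict ∅) (-1) = K ∙ Finsupp.single ∅ 1 := by
    have hC : (Δ.restrict ∅).chains K (-1) = K ∙ Finsupp.single ∅ 1 := by
      rw [chains]
      congr 1
      ext f
      simp only [hfaces, exists_eq_left, card_empty, Set.mem_singleton_iff]
      simp
    rw [cycles, hC, inf_eq_left, Submodule.span_le, Set.singleton_subset_iff, SetLike.mem_coe,
      LinearMap.mem_ker]
    classical
    rw [bdry_single, sum_empty]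
  have hB : boundaries K (Δ.restrict ∅) (-1) = ⊥ := by
    rw [boundaries, neg_add_cancel, chains, Submodule.span_eq_bot.2, Submodule.map_bot]
    rintro _ ⟨s, hs, hc, rfl⟩
    simp [(hfaces s).1 hs] at hc
  rw [rhd_eq, hZ, hB, finrank_span_singleton (by simp), finrank_bot]

variable (K) in
/-- The multigraded Betti number `β_{i,W}` of Hochster's formula. -/
noncomputable def multiBetti (Δ : SComplex U) (i : ℤ) (W : Finset U) : ℕ :=
  rhd K (Δ.restrict W) (#W - i - 1)

theorem multiBetti_zero_empty (Δ : SComplex U) (h : ∅ ∈ Δ.faces) : multiBetti K Δ 0 ∅ = 1 := by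
  simpa [multiBetti] using rhd_restrict_empty (K := K) Δ h

variable [Fintype U]

theorem betti_natCast (Δ : SComplex U) (i : ℤ) (d : ℕ) :
    betti K Δ i d = ∑ W ∈ Δ.vertexFinset.powersetCard d, multiBetti K Δ i W := by
  rw [betti, if_neg (by omega), Int.toNat_natCast]
  exact sum_congr rfl fun W hW => by rw [multiBetti, (mem_powersetCard.1 hW).2]

theorem totalBetti_eq_sum_powerset (Δ : SComplex U) (i : ℤ) :
    totalBetti K Δ i = ∑ W ∈ Δ.vertexFinset.powerset, multiBetti K Δ i W := by
  rw [totalBetti, sum_powerset]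
  simp only [betti_natCast]
  refine (sum_subset (range_subset_range.2 (by simpa using card_le_univ _)) fun d _ hd => ?_).symm
  rw [powersetCard_eq_empty.2 (by simpa using hd), sum_empty]

theorem totalBetti_eq_zero_of_card_lt (Δ : SComplex U) {i : ℤ} (hi : Fintype.card U < i) :
    totalBetti K Δ i = 0 := by
  rw [totalBetti_eq_sum_powerset]
  refine sum_eq_zero fun W _ => rhd_eq_zero_of_lt_neg_one _ ?_
  have := card_le_univ W
  omega

theorem totalBetti_zero_ne_zero (Δ : SComplex U) (h : ∅ ∈ Δ.faces) : totalBetti K Δ 0 ≠ 0 := by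
  rw [totalBetti_eq_sum_powerset]
  refine (Nat.lt_of_lt_of_le ?_ (single_le_sum (fun _ _ => Nat.zero_le _)
    (empty_mem_powerset _))).ne'
  rw [multiBetti_zero_empty Δ h]
  exact Nat.one_pos

theorem pd_eq_of_isTopDegree (Δ : SComplex U) {p : ℕ} (h : IsTopDegree (totalBetti K Δ) p) :
    pd K Δ = p := by
  refine IsGreatest.csSup_eq ⟨h.1, fun i hi => ?_⟩
  by_contra hlt
  exact hi (h.2 i (by exact_mod_cast not_le.1 hlt))

theorem isTopDegree_pd (Δ : SComplex U) (h : ∅ ∈ Δ.faces) :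
    IsTopDegree (totalBetti K Δ) (pd K Δ) := by
  have hbdd : BddAbove {i : ℕ | totalBetti K Δ i ≠ 0} := ⟨Fintype.card U, fun i hi => by
    by_contra hlt
    exact hi (totalBetti_eq_zero_of_card_lt Δ (by exact_mod_cast not_le.1 hlt))⟩
  refine ⟨Nat.sSup_mem ⟨0, totalBetti_zero_ne_zero Δ h⟩ hbdd, fun i hi => ?_⟩
  lift i to ℕ using (Nat.cast_nonneg _).trans hi.le
  by_contra hne
  exact (not_le.2 (by exact_mod_cast hi : pd K Δ < i)) (le_csSup hbdd hne)

end Betti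

end SComplex

section Graph

open SComplex

variable {K : Type*} [Field K] {V : Type*}

theorem empty_mem_indepComplex (G : SimpleGraph V) : ∅ ∈ (indepComplex G).faces :=
  fun _ h => absurd h (notMem_empty _)

theorem insert_mem_indepComplex [DecidableEq V] {G : SimpleGraph V} {s : Finset V} {x : V}
    (hs : s ∈ (indepComplex G).faces) (hx : ∀ u ∈ s, ¬ G.Adj x u) :
    insert x s ∈ (indepComplex G).faces := by
  intro a ha b hb
  rcases mem_insert.1 ha with rfl | ha' <;> rcases mem_insert.1 hb with rfl | hb'
  · exact G.irrefl
  · exact hx b hb'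
  · exact fun h => hx a ha' h.symm
  · exact hs a ha' b hb'

theorem vertexFinset_indepComplex [Fintype V] (G : SimpleGraph V) :
    (indepComplex G).vertexFinset = univ :=
  eq_univ_of_forall fun u => (Set.Finite.mem_toFinset _).2 fun a ha b hb => by
    rw [mem_singleton] at ha hb
    subst ha hb
    exact G.irrefl

theorem map_restrict_indepComplex_induce (G : SimpleGraph V) (P : Set V) (W : Finset P) :
    ((indepComplex (G.induce P)).restrict W).map (Function.Embedding.subtype _)
      = (indepComplex G).restrict (W.map (Function.Embedding.subtype _)) := by
  ext s
  constructor
  · rintro ⟨t, ⟨ht, htW⟩, rfl⟩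
    refine ⟨fun a ha b hb => ?_, map_subset_map.2 htW⟩
    obtain ⟨a', ha', rfl⟩ := mem_map.1 ha
    obtain ⟨b', hb', rfl⟩ := mem_map.1 hb
    exact ht a' ha' b' hb'
  · rintro ⟨hs, hsW⟩
    obtain ⟨t, htW, rfl⟩ := subset_map_iff.1 hsW
    exact ⟨t, ⟨fun a ha b hb => hs _ (mem_map_of_mem _ ha) _ (mem_map_of_mem _ hb), htW⟩, rfl⟩

theorem isTopDegree_pdG [Fintype V] (G : SimpleGraph V) : IsTopDegree (totalBettiG K G) (pdG K G) :=
  isTopDegree_pd _ (empty_mem_indepComplex G)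

theorem pdG_eq_of_isTopDegree [Fintype V] (G : SimpleGraph V) {p : ℕ}
    (h : IsTopDegree (totalBettiG K G) p) : pdG K G = p :=
  pd_eq_of_isTopDegree _ h

theorem totalBettiG_eq_sum [Fintype V] (G : SimpleGraph V) (i : ℤ) :
    totalBettiG K G i = ∑ W ∈ univ.powerset, multiBetti K (indepComplex G) i W := by
  rw [totalBettiG, totalBetti_eq_sum_powerset, vertexFinset_indepComplex]

theorem totalBettiG_induce (G : SimpleGraph V) (P : Set V) [Fintype P] (i : ℤ) :
    totalBettiG K (G.induce P) i
      = ∑ W ∈ P.toFinset.powerset, multiBetti K (indepComplex G) i W := by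
  rw [totalBettiG_eq_sum]
  refine sum_bij (fun W _ => W.map (Function.Embedding.subtype _)) (fun W _ => ?_)
    (fun _ _ _ _ h => map_injective _ h) (fun W hW => ?_) (fun W _ => ?_)
  · exact mem_powerset.2 (map_subset_map.2 (subset_univ W))
  · obtain ⟨W', -, rfl⟩ := subset_map_iff.1 (mem_powerset.1 hW)
    exact ⟨W', mem_powerset.2 (subset_univ _), rfl⟩
  · rw [multiBetti, multiBetti, ← map_restrict_indepComplex_induce, rhd_map, card_map]

variable [DecidableEq V] {G : SimpleGraph V} {v v₁ : V}

theorem insert_mem_restrict_of_leaf (hleaf : ∀ u, G.Adj v₁ u → u = v) {W : Finset V}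
    (hv₁ : v₁ ∈ W) {s : Finset V} (hs : s ∈ ((indepComplex G).restrict W).faces) (hv : v ∉ s) :
    insert v₁ s ∈ ((indepComplex G).restrict W).faces :=
  ⟨insert_mem_indepComplex hs.1 fun u hu h => hv (hleaf u h ▸ hu), insert_subset hv₁ hs.2⟩

theorem multiBetti_eq_zero_of_leaf (hleaf : ∀ u, G.Adj v₁ u → u = v) {W : Finset V}
    (hv₁ : v₁ ∈ W) (hv : v ∉ W) (i : ℤ) : multiBetti K (indepComplex G) i W = 0 :=
  rhd_eq_zero_of_cone _
    (fun _ hs => insert_mem_restrict_of_leaf hleaf hv₁ hs fun h => hv (hs.2 h)) _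

variable [DecidableRel G.Adj]

theorem link_restrict_indepComplex {W : Finset V} (hv : v ∈ W) :
    ((indepComplex G).restrict W).link {v}
      = (indepComplex G).restrict {u ∈ W | u ≠ v ∧ ¬ G.Adj v u} := by
  ext s
  rw [mem_link_singleton]
  constructor
  · rintro ⟨hvs, hind, hsW⟩
    refine ⟨(indepComplex G).down_closed hind (subset_insert v s), fun u hu => ?_⟩
    exact mem_filter.2 ⟨hsW (mem_insert_of_mem hu), fun h => hvs (h ▸ hu),
      hind v (mem_insert_self v s) u (mem_insert_of_mem hu)⟩
  · rintro ⟨hind, hsW⟩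
    have hmem := fun u (hu : u ∈ s) => mem_filter.1 (hsW hu)
    exact ⟨fun h => (hmem v h).2.1 rfl,
      insert_mem_indepComplex hind fun u hu => (hmem u hu).2.2,
      insert_subset hv fun u hu => (hmem u hu).1⟩

theorem rhd_restrict_succ_eq_of_leaf [Fintype V] (hvv₁ : v ≠ v₁)
    (hleaf : ∀ u, G.Adj v₁ u → u = v) {W : Finset V} (hv : v ∈ W) (hv₁ : v₁ ∈ W) (n : ℤ) :
    rhd K ((indepComplex G).restrict W) (n + 1)
      = rhd K ((indepComplex G).restrict {u ∈ W | u ≠ v ∧ ¬ G.Adj v u}) n := by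
  rw [rhd_succ_eq_rhd_link _ hvv₁ fun s hs => insert_mem_restrict_of_leaf hleaf hv₁ hs.1 hs.2,
    link_restrict_indepComplex hv]

theorem multiBetti_insert_insert_of_leaf [Fintype V] (hadj : G.Adj v v₁)
    (hleaf : ∀ u, G.Adj v₁ u → u = v) {S B : Finset V} (hS : ∀ u ∈ S, u ≠ v₁ ∧ G.Adj v u)
    (hB : ∀ u ∈ B, u ≠ v ∧ ¬ G.Adj v u) (i : ℤ) :
    multiBetti K (indepComplex G) i (insert v₁ (insert v (S ∪ B)))
      = multiBetti K (indepComplex G) (i - 1 - #S) B := by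
  have hvSB : v ∉ S ∪ B := by
    simp only [mem_union, not_or]
    exact ⟨fun h => G.irrefl (hS v h).2, fun h => (hB v h).1 rfl⟩
  have hv₁SB : v₁ ∉ insert v (S ∪ B) := by
    simp only [mem_insert, mem_union, not_or]
    exact ⟨(G.ne_of_adj hadj).symm, fun h => (hS v₁ h).1 rfl, fun h => (hB v₁ h).2 hadj⟩
  have hcard : #(insert v₁ (insert v (S ∪ B))) = #S + #B + 2 := by
    rw [card_insert_of_notMem hv₁SB, card_insert_of_notMem hvSB,
      card_union_of_disjoint (disjoint_left.2 fun u hu hu' => (hB u hu').2 (hS u hu).2)]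
  have hfilter : {u ∈ insert v₁ (insert v (S ∪ B)) | u ≠ v ∧ ¬ G.Adj v u} = B := by
    ext u
    simp only [mem_filter, mem_insert, mem_union]
    constructor
    · rintro ⟨rfl | rfl | hu | hu, hne, hnadj⟩
      exacts [absurd hadj hnadj, absurd rfl hne, absurd (hS u hu).2 hnadj, hu]
    · exact fun hu => ⟨Or.inr (Or.inr (Or.inr hu)), hB u hu⟩
  rw [multiBetti, multiBetti, show (#(insert v₁ (insert v (S ∪ B))) : ℤ) - i - 1
      = #B - (i - 1 - #S) - 1 + 1 by rw [hcard]; push_cast; ring,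
    rhd_restrict_succ_eq_of_leaf (G.ne_of_adj hadj) hleaf
      (mem_insert_of_mem (mem_insert_self _ _)) (mem_insert_self _ _), hfilter]

theorem totalBettiG_eq_add_sum_of_leaf [Fintype V] (hadj : G.Adj v v₁)
    (hleaf : ∀ u, G.Adj v₁ u → u = v) (i : ℤ) :
    totalBettiG K G i = totalBettiG K (G.induce {u | u ≠ v₁}) i
      + ∑ S ∈ ((G.neighborFinset v).erase v₁).powerset,
          totalBettiG K (G.induce {u | u ≠ v ∧ ¬ G.Adj v u}) (i - 1 - #S) := by
  set X := (G.neighborFinset v).erase v₁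
  set M := {u | u ≠ v ∧ ¬ G.Adj v u}.toFinset
  have hX : ∀ u ∈ X, u ≠ v₁ ∧ G.Adj v u := fun u hu => by simpa [X] using hu
  have hM : ∀ u ∈ M, u ≠ v ∧ ¬ G.Adj v u := fun u hu => by simpa [M] using hu
  have hvXM : v ∉ X ∪ M := by
    simp only [mem_union, not_or]
    exact ⟨fun h => G.irrefl (hX v h).2, fun h => (hM v h).1 rfl⟩
  have hU : univ.erase v₁ = insert v (X ∪ M) := by
    ext u
    simp only [mem_erase, mem_univ, and_true, mem_insert, mem_union, X, M,
      SimpleGraph.mem_neighborFinset, Set.mem_toFinset, Set.mem_ofPred_eq]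
    constructor
    · tauto
    · rintro (rfl | ⟨h, -⟩ | ⟨-, h⟩)
      exacts [G.ne_of_adj hadj, h, fun e => h (e ▸ hadj)]
  have hU₁ : {u | u ≠ v₁}.toFinset = univ.erase v₁ := by
    ext u
    simp
  rw [totalBettiG_eq_sum, totalBettiG_induce, hU₁, ← insert_erase (mem_univ v₁),
    sum_powerset_insert (notMem_erase v₁ univ), erase_insert (notMem_erase v₁ univ),
    add_right_inj]
  simp only [totalBettiG_induce]
  rw [hU, sum_powerset_insert hvXM, sum_eq_zero fun W hW => multiBetti_eq_zero_of_leaf hleaf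
      (mem_insert_self v₁ W) (fun h => (mem_insert.1 h).elim (G.ne_of_adj hadj)
        fun h => hvXM (mem_powerset.1 hW h)) i,
    zero_add, sum_powerset_union_of_disjoint (disjoint_left.2 fun u hu hu' =>
      (hM u hu').2 (hX u hu).2)]
  exact sum_congr rfl fun S hS => sum_congr rfl fun B hB =>
    multiBetti_insert_insert_of_leaf hadj hleaf (fun u hu => hX u (mem_powerset.1 hS hu))
      (fun u hu => hM u (mem_powerset.1 hB hu)) i

end Graph

theorem top_betti_forest_recursion_general {V : Type*} [Fintype V] [DecidableEq V] (K : Type*) [Field K]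
    (T : SimpleGraph V) [DecidableRel T.Adj]
    (v v₁ w : V) (hadj : T.Adj v v₁) (hne : v₁ ≠ w)
    (hleaf : ∀ u : V, T.Adj v u → u ≠ w → T.degree u = 1) :
    (pdG K (T.induce {u : V | u ≠ v₁})
        > T.degree v + pdG K (T.induce {u : V | u ≠ v ∧ ¬ T.Adj v u}) →
      totalBettiG K T (pdG K T)
        = totalBettiG K (T.induce {u : V | u ≠ v₁}) (pdG K (T.induce {u : V | u ≠ v₁})))
    ∧ (pdG K (T.induce {u : V | u ≠ v₁})
        < T.degree v + pdG K (T.induce {u : V | u ≠ v ∧ ¬ T.Adj v u}) →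
      totalBettiG K T (pdG K T)
        = totalBettiG K (T.induce {u : V | u ≠ v ∧ ¬ T.Adj v u})
            (pdG K (T.induce {u : V | u ≠ v ∧ ¬ T.Adj v u})))
    ∧ (pdG K (T.induce {u : V | u ≠ v₁})
        = T.degree v + pdG K (T.induce {u : V | u ≠ v ∧ ¬ T.Adj v u}) →
      totalBettiG K T (pdG K T)
        = totalBettiG K (T.induce {u : V | u ≠ v₁}) (pdG K (T.induce {u : V | u ≠ v₁}))
          + totalBettiG K (T.induce {u : V | u ≠ v ∧ ¬ T.Adj v u})
              (pdG K (T.induce {u : V | u ≠ v ∧ ¬ T.Adj v u}))) := by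
  have hv₁ : ∀ u, T.Adj v₁ u → u = v := fun u hu =>
    (T.degree_eq_one_iff_existsUnique_adj.1 (hleaf v₁ hadj hne)).unique hu hadj.symm
  have hrec : totalBettiG K T = totalBettiG K (T.induce {u | u ≠ v₁})
      + fun i => ∑ S ∈ ((T.neighborFinset v).erase v₁).powerset,
          totalBettiG K (T.induce {u | u ≠ v ∧ ¬ T.Adj v u}) (i - 1 - #S) :=
    funext (totalBettiG_eq_add_sum_of_leaf hadj hv₁)
  have hdeg : #((T.neighborFinset v).erase v₁) + 1 = T.degree v :=
    card_erase_add_one ((T.mem_neighborFinset v v₁).2 hadj)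
  have h' := isTopDegree_pdG (K := K) (T.induce {u | u ≠ v₁})
  obtain ⟨h'', hval''⟩ := (isTopDegree_pdG (K := K)
    (T.induce {u | u ≠ v ∧ ¬ T.Adj v u})).sum_powerset_sub ((T.neighborFinset v).erase v₁)
    (N := (T.degree v + pdG K (T.induce {u | u ≠ v ∧ ¬ T.Adj v u}) : ℕ)) (by push_cast; omega)
  refine ⟨fun hlt => ?_, fun hgt => ?_, fun heq => ?_⟩
  · obtain ⟨htop, hval⟩ := h'.add_of_lt h''.2 (by omega)
    rw [← hrec] at htop hval
    rw [pdG_eq_of_isTopDegree T htop, hval]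
  · obtain ⟨htop, hval⟩ := h''.add_of_lt h'.2 (by omega)
    rw [add_comm, ← hrec] at htop hval
    rw [pdG_eq_of_isTopDegree T htop, hval, hval'']
  · rw [← heq] at h'' hval''
    have htop := h'.add h''
    rw [← hrec] at htop
    rw [pdG_eq_of_isTopDegree T htop, hrec, Pi.add_apply, hval'']

/-- Behaviour of the top total Betti number of a forest under the recursion:
with `T'`, `T''`, `n = deg v` as in the recursive setup, `β_{pd(T)}(T)` equals
`β_{pd(T')}(T')`, `β_{pd(T'')}(T'')`, or their sum, according to the comparison of
`pd(T')` with `n + pd(T'')`. -/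
theorem top_betti_forest_recursion {V : Type*} [Fintype V] [DecidableEq V] (K : Type*) [Field K]
    (T : SimpleGraph V) [DecidableRel T.Adj] (hT : T.IsAcyclic)
    (v v₁ w : V) (hadj : T.Adj v v₁) (hw : T.Adj v w) (hne : v₁ ≠ w)
    (hleaf : ∀ u : V, T.Adj v u → u ≠ w → T.degree u = 1) :
    (pdG K (T.induce {u : V | u ≠ v₁})
        > T.degree v + pdG K (T.induce {u : V | u ≠ v ∧ ¬ T.Adj v u}) →
      totalBettiG K T (pdG K T)
        = totalBettiG K (T.induce {u : V | u ≠ v₁}) (pdG K (T.induce {u : V | u ≠ v₁})))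
    ∧ (pdG K (T.induce {u : V | u ≠ v₁})
        < T.degree v + pdG K (T.induce {u : V | u ≠ v ∧ ¬ T.Adj v u}) →
      totalBettiG K T (pdG K T)
        = totalBettiG K (T.induce {u : V | u ≠ v ∧ ¬ T.Adj v u})
            (pdG K (T.induce {u : V | u ≠ v ∧ ¬ T.Adj v u})))
    ∧ (pdG K (T.induce {u : V | u ≠ v₁})
        = T.degree v + pdG K (T.induce {u : V | u ≠ v ∧ ¬ T.Adj v u}) →
      totalBettiG K T (pdG K T)
        = totalBettiG K (T.induce {u : V | u ≠ v₁}) (pdG K (T.induce {u : V | u ≠ v₁}))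
          + totalBettiG K (T.induce {u : V | u ≠ v ∧ ¬ T.Adj v u})
              (pdG K (T.induce {u : V | u ≠ v ∧ ¬ T.Adj v u}))) :=
  top_betti_forest_recursion_general K T v v₁ w hadj hne hleaf
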